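/- For the octonion multiplication on ℝ⁸, ‖x·y‖ = ‖x‖·‖y‖ for all x, y ∈ ℝ⁸, where ‖·‖ is the Euclidean norm. -/

import Mathlib

open Quaternion

/-- Octonion multiplication on `ℝ⁸ ≅ ℍ × ℍ`, via the Cayley–Dickson construction. -/
noncomputable def octMul (x y : ℍ × ℍ) : ℍ × ℍ :=
  (x.1 * y.1 - star y.2 * x.2, y.2 * x.1 + x.2 * star y.1)

/-- The Euclidean norm on the octonions `ℝ⁸ ≅ ℍ × ℍ`. -/
noncomputable def octNorm (x : ℍ × ℍ) : ℝ := Real.sqrt (‖x.1‖ ^ 2 + ‖x.2‖ ^ 2)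

/-!
Expanding `‖a c - d̄ b‖² + ‖d a + b c̄‖²` with the polarization identities, the squared terms
give `(‖a‖² + ‖b‖²)(‖c‖² + ‖d‖²)` because `ℍ` is a normed division algebra, and the cross terms
`Re (a c b̄ d)` and `Re (d a c b̄)` cancel because the real part of a quaternion product is
invariant under cyclic permutation.
-/

namespace Quaternion

lemma re_mul_comm (a b : ℍ) : (a * b).re = (b * a).re := by
  simp only [re_mul]
  ring

lemma inner_mul_star_mul_eq_inner_mul_mul_star (a b c d : ℍ) :
    inner ℝ (a * c) (star d * b) = inner ℝ (d * a) (b * star c) := by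
  simp only [inner_def, star_mul, star_star, ← mul_assoc]
  rw [re_mul_comm, ← mul_assoc, ← mul_assoc]

lemma norm_sq_cayleyDickson_mul (a b c d : ℍ) :
    ‖a * c - star d * b‖ ^ 2 + ‖d * a + b * star c‖ ^ 2 =
      (‖a‖ ^ 2 + ‖b‖ ^ 2) * (‖c‖ ^ 2 + ‖d‖ ^ 2) := by
  rw [norm_sub_sq_real, norm_add_sq_real, inner_mul_star_mul_eq_inner_mul_mul_star]
  simp only [norm_mul, norm_star]
  ring

end Quaternion

/-- For octonion multiplication on `ℝ⁸`, `‖x·y‖ = ‖x‖·‖y‖` for all `x, y`. -/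
theorem octonion_norm_mul (x y : ℍ × ℍ) : octNorm (octMul x y) = octNorm x * octNorm y := by
  rw [octNorm, octNorm, octNorm, ← Real.sqrt_mul (by positivity), octMul,
    norm_sq_cayleyDickson_mul]
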